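/- arXiv:1602.00080 — 2 statements merged into one kernel-verified Lean document; each statement's English description precedes it below -/
import Mathlib

section
/- If x ∈ B(μ), then the topological support of μ is contained in the ω-limit set of x under f: supp(μ) ⊆ ω(x) = ⋂_{N≥0} closure{f^n(x) : n ≥ N}. -/
open MeasureTheory Filter Topology
open scoped ENNReal NNReal

set_option linter.unusedSectionVars false

variable {M : Type*} [MetricSpace M] [CompactSpace M] [MeasurableSpace M] [BorelSpace M]

/-- The `n`-th empirical measure of `x` under `f`:
`e_n(x) = (1/n) * (dirac x + dirac (f x) + ... + dirac (f^(n-1) x))`. -/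
noncomputable def empMeasure (f : M → M) (x : M) (n : ℕ) : Measure M :=
  (n : ℝ≥0∞)⁻¹ • ∑ k ∈ Finset.range n, Measure.dirac (f^[k] x)

theorem empMeasure_isProbabilityMeasure (f : M → M) (x : M) {n : ℕ} (hn : n ≠ 0) :
    IsProbabilityMeasure (empMeasure f x n) := by
  constructor
  simp only [empMeasure, Measure.smul_apply, Measure.coe_finset_sum, Finset.sum_apply,
    Measure.dirac_apply' _ MeasurableSet.univ, Set.indicator_univ, Pi.one_apply,
    Finset.sum_const, Finset.card_range, nsmul_eq_mul, mul_one, smul_eq_mul]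
  exact ENNReal.inv_mul_cancel (by exact_mod_cast hn) (by simp)

/-- The `(n+1)`-st empirical measure of `x` under `f`, bundled as a Borel probability
measure; as `n → ∞` this runs through all the empirical measures `e_n(x)`, `n ≥ 1`. -/
noncomputable def empProb (f : M → M) (x : M) (n : ℕ) : ProbabilityMeasure M :=
  ⟨empMeasure f x (n + 1), empMeasure_isProbabilityMeasure f x n.succ_ne_zero⟩

/-- The basin `B(μ)` of a Borel probability measure `μ`: the set of points `x` whose
empirical measures `e_n(x)` converge to `μ` in the topology of weak convergence of
probability measures. -/
def basin (f : M → M) (μ : ProbabilityMeasure M) : Set M :=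
  {x | Tendsto (fun n => empProb f x n) atTop (𝓝 μ)}

/-- The topological support of `μ`: the points all of whose open neighborhoods have
positive `μ`-measure. -/
def measureSupport (μ : ProbabilityMeasure M) : Set M :=
  {y | ∀ U : Set M, IsOpen U → y ∈ U → 0 < μ U}

/-- The `ω`-limit set of `x` under `f`: `⋂_{N ≥ 0} closure {f^n x : n ≥ N}`. -/
def omegaLimitSet (f : M → M) (x : M) : Set M :=
  ⋂ N : ℕ, closure {y | ∃ n, N ≤ n ∧ f^[n] x = y}

/-! If `y ∉ closure {f^n x : n ≥ N}`, the complement `U` of that closure is an open set which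
the orbit of `x` visits at most `N` times, so `e_n(x)(U) ≤ N / n → 0`. By the portmanteau
theorem `μ(U) ≤ liminf e_n(x)(U) = 0`, which is impossible for a neighbourhood of a point of
`supp μ`. -/

theorem ProbabilityMeasure.measure_eq_zero_of_tendsto_measure_zero {Ω ι : Type*}
    {L : Filter ι} [L.NeBot] [MeasurableSpace Ω] [TopologicalSpace Ω] [OpensMeasurableSpace Ω]
    [HasOuterApproxClosed Ω] {μ : ProbabilityMeasure Ω} {μs : ι → ProbabilityMeasure Ω}
    (μs_lim : Tendsto μs L (𝓝 μ)) {G : Set Ω} (G_open : IsOpen G)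
    (hG : Tendsto (fun i ↦ (μs i : Measure Ω) G) L (𝓝 0)) :
    (μ : Measure Ω) G = 0 :=
  nonpos_iff_eq_zero.mp <|
    hG.liminf_eq ▸ ProbabilityMeasure.le_liminf_measure_open_of_tendsto μs_lim G_open

theorem empMeasure_apply_le_of_forall_ge_iterate_notMem {f : M → M} {x : M} {U : Set M}
    {N : ℕ} (hU : MeasurableSet U) (hN : ∀ k, N ≤ k → f^[k] x ∉ U) (m : ℕ) :
    empMeasure f x m U ≤ (m : ℝ≥0∞)⁻¹ * N := by
  simp only [empMeasure, Measure.smul_apply, Measure.coe_finsetSum, Finset.sum_apply, smul_eq_mul]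
  gcongr
  calc ∑ k ∈ Finset.range m, Measure.dirac (f^[k] x) U
      ≤ ∑ k ∈ Finset.range N, Measure.dirac (f^[k] x) U := by
        refine Finset.sum_le_sum_of_ne_zero fun k _ hk ↦ Finset.mem_range.mpr ?_
        by_contra! hNk
        exact hk (by rw [Measure.dirac_apply' _ hU, Set.indicator_of_notMem (hN k hNk)])
    _ ≤ ∑ _k ∈ Finset.range N, (1 : ℝ≥0∞) := Finset.sum_le_sum fun k _ ↦ prob_le_one
    _ = N := by simp

theorem tendsto_empProb_apply_zero_of_forall_ge_iterate_notMem {f : M → M} {x : M}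
    {U : Set M} {N : ℕ} (hU : MeasurableSet U) (hN : ∀ k, N ≤ k → f^[k] x ∉ U) :
    Tendsto (fun n ↦ (empProb f x n : Measure M) U) atTop (𝓝 0) := by
  have hbound : Tendsto (fun n : ℕ ↦ ((n + 1 : ℕ) : ℝ≥0∞)⁻¹ * N) atTop (𝓝 0) := by
    simpa using ENNReal.Tendsto.mul_const
      (ENNReal.tendsto_inv_nat_nhds_zero.comp (tendsto_add_atTop_nat 1))
      (Or.inr (ENNReal.natCast_ne_top N))
  exact tendsto_of_tendsto_of_tendsto_of_le_of_le tendsto_const_nhds hbound (fun _ ↦ zero_le)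
    fun n ↦ empMeasure_apply_le_of_forall_ge_iterate_notMem hU hN (n + 1)

theorem measure_eq_zero_of_mem_basin_of_forall_ge_iterate_notMem {f : M → M}
    {μ : ProbabilityMeasure M} {x : M} (hx : x ∈ basin f μ) {U : Set M} (hU : IsOpen U)
    {N : ℕ} (hN : ∀ k, N ≤ k → f^[k] x ∉ U) : μ U = 0 := by
  have := ProbabilityMeasure.measure_eq_zero_of_tendsto_measure_zero hx hU
    (tendsto_empProb_apply_zero_of_forall_ge_iterate_notMem hU.measurableSet hN)
  rwa [← ProbabilityMeasure.ennreal_coeFn_eq_coeFn_toMeasure, ENNReal.coe_eq_zero] at this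

theorem support_subset_omegaLimit_general (f : M → M)
    (μ : ProbabilityMeasure M) (x : M) (hx : x ∈ basin f μ) :
    measureSupport μ ⊆ omegaLimitSet f x := by
  intro y hy
  refine Set.mem_iInter.mpr fun N ↦ ?_
  set tail := {z | ∃ n, N ≤ n ∧ f^[n] x = z}
  by_contra hy_notMem
  have hU : IsOpen (closure tail)ᶜ := isClosed_closure.isOpen_compl
  have hμU : μ (closure tail)ᶜ = 0 :=
    measure_eq_zero_of_mem_basin_of_forall_ge_iterate_notMem hx hU
      fun k hk hk_notMem ↦ hk_notMem (subset_closure ⟨k, hk, rfl⟩)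
  exact (hy _ hU hy_notMem).ne' hμU

/-- if `x ∈ B(μ)` then `supp μ ⊆ ω(x)`. -/
theorem support_subset_omegaLimit (f : M → M) (hf : Continuous f)
    (μ : ProbabilityMeasure M) (x : M) (hx : x ∈ basin f μ) :
    measureSupport μ ⊆ omegaLimitSet f x :=
  support_subset_omegaLimit_general f μ x hx
end

section
/- Residual continuity of upper semicontinuous compact-valued maps (Fort's theorem, as asserted in the paper for Φ_K): let X be a complete metric space, Y a metric space, and Φ a map from X to the space of nonempty compact subsets of Y, equipped with the Hausdorff distance. Assume Φ is upper semicontinuous, i.e. for every x ∈ X and every ε > 0 there is δ > 0 such that d(x, y) < δ implies Φ(y) is contained in the open ε-neighborhood of Φ(x). Then the set of points of X at which Φ is continuous (with respect to the Hausdorff distance) is residual in X, i.e. contains a countable intersection of dense open sets. -/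
open Filter Topology

/-- Fort's theorem: an upper semicontinuous map from a complete metric
space `X` into the nonempty compact subsets of a metric space `Y` (with the Hausdorff
distance) is continuous at a residual set of points of `X`. -/
theorem continuity_points_residual_of_usc {X Y : Type*} [MetricSpace X] [CompleteSpace X]
    [MetricSpace Y] (Φ : X → TopologicalSpace.NonemptyCompacts Y)
    (husc : ∀ x : X, ∀ ε : ℝ, 0 < ε → ∃ δ : ℝ, 0 < δ ∧ ∀ y : X, dist x y < δ →
      (Φ y : Set Y) ⊆ Metric.thickening ε (Φ x)) :
    {x : X | ContinuousAt Φ x} ∈ residual X := by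
  classical
  -- For ε > 0, the closed sets C ε n
  set C : ℝ → ℕ → Set X := fun ε n =>
    {x | ∀ y : X, dist x y < 1 / (n + 1) → ∀ z ∈ (Φ y : Set Y),
      Metric.infDist z (Φ x) ≤ ε} with hC
  have hCclosed : ∀ ε : ℝ, 0 < ε → ∀ n : ℕ, IsClosed (C ε n) := by
    intro ε hε n
    rw [← isOpen_compl_iff, isOpen_iff_mem_nhds]
    by_contra h
    push_neg at h
    obtain ⟨x, hxc, hx⟩ := h
    -- x is in the closure of C ε n but not in C ε n; derive x ∈ C ε n.
    apply hxc
    intro y hy z hz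
    refine le_of_forall_pos_le_add fun ε' hε' => ?_
    obtain ⟨δ, hδ, hδusc⟩ := husc x ε' hε'
    -- find x' ∈ C ε n close to x
    have hball : Metric.ball x (min δ (1 / (n + 1) - dist x y)) ∈ 𝓝 x :=
      Metric.ball_mem_nhds x (lt_min hδ (by linarith))
    have : ¬ Metric.ball x (min δ (1 / (n + 1) - dist x y)) ⊆ (C ε n)ᶜ := by
      intro hsub
      exact hx (mem_of_superset hball hsub)
    obtain ⟨x', hx'ball, hx'C⟩ := Set.not_subset.1 this
    rw [Set.notMem_compl_iff] at hx'C
    rw [Metric.mem_ball, dist_comm, lt_min_iff] at hx'ball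
    have hx'y : dist x' y < 1 / (n + 1) := by
      have h := dist_triangle x' x y
      rw [dist_comm x' x] at h
      linarith [hx'ball.2]
    have h1 : Metric.infDist z (Φ x') ≤ ε := hx'C y hx'y z hz
    obtain ⟨w, hw, hwd⟩ := (Φ x').isCompact.exists_infDist_eq_dist (Φ x').nonempty z
    have hw' : w ∈ Metric.thickening ε' (Φ x : Set Y) := by
      apply hδusc x' hx'ball.1
      exact hw
    obtain ⟨v, hv, hvd⟩ := Metric.mem_thickening_iff.1 hw'
    calc Metric.infDist z (Φ x) ≤ dist z v := Metric.infDist_le_dist_of_mem hv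
      _ ≤ dist z w + dist w v := dist_triangle _ _ _
      _ ≤ ε + ε' := by rw [← hwd] at *; exact add_le_add h1 hvd.le
  have hCcover : ∀ ε : ℝ, 0 < ε → ∀ x : X, ∃ n : ℕ, x ∈ C ε n := by
    intro ε hε x
    obtain ⟨δ, hδ, hδusc⟩ := husc x ε hε
    obtain ⟨n, hn⟩ := exists_nat_one_div_lt hδ
    refine ⟨n, fun y hy z hz => ?_⟩
    have : z ∈ Metric.thickening ε (Φ x : Set Y) := hδusc y (hy.trans hn) hz
    obtain ⟨v, hv, hvd⟩ := Metric.mem_thickening_iff.1 this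
    exact (Metric.infDist_le_dist_of_mem hv).trans hvd.le
  -- near an interior point of C ε n, Φ varies by at most ε in Hausdorff distance
  have hint : ∀ ε : ℝ, 0 < ε → ∀ n : ℕ, ∀ x ∈ interior (C ε n),
      ∃ δ > 0, ∀ y : X, dist y x < δ → dist (Φ y) (Φ x) ≤ ε := by
    intro ε hε n x hx
    obtain ⟨r, hr, hrsub⟩ := Metric.isOpen_iff.1 isOpen_interior x hx
    refine ⟨min r (1 / (n + 1)), lt_min hr (by positivity), fun y hy => ?_⟩
    rw [lt_min_iff] at hy
    have hyC : y ∈ C ε n := interior_subset (hrsub hy.1)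
    have hxC : x ∈ C ε n := interior_subset hx
    have h1 : ∀ z ∈ (Φ y : Set Y), Metric.infDist z (Φ x) ≤ ε :=
      hxC y (by rw [dist_comm]; exact hy.2)
    have h2 : ∀ z ∈ (Φ x : Set Y), Metric.infDist z (Φ y) ≤ ε := hyC x hy.2
    rw [Metric.NonemptyCompacts.dist_eq]
    exact Metric.hausdorffDist_le_of_infDist hε.le h1 h2
  -- the dense open sets
  set G : ℕ → Set X := fun m => ⋃ n : ℕ, interior (C (1 / (m + 1)) n) with hG
  have hGpos : ∀ m : ℕ, (0 : ℝ) < 1 / (m + 1) := fun m => by positivity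
  have hGresidual : ∀ m : ℕ, G m ∈ residual X := by
    intro m
    apply residual_of_dense_open (isOpen_iUnion fun n => isOpen_interior)
    apply dense_iUnion_interior_of_closed (hCclosed _ (hGpos m))
    exact Set.iUnion_eq_univ_iff.2 fun x => hCcover _ (hGpos m) x
  have hsub : (⋂ m : ℕ, G m) ⊆ {x : X | ContinuousAt Φ x} := by
    intro x hx
    rw [Set.mem_setOf_eq, Metric.continuousAt_iff]
    intro ε hε
    obtain ⟨m, hm⟩ := exists_nat_one_div_lt hε
    have hxm : x ∈ G m := Set.mem_iInter.1 hx m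
    obtain ⟨n, hn⟩ := Set.mem_iUnion.1 hxm
    obtain ⟨δ, hδ, hδle⟩ := hint _ (hGpos m) n x hn
    exact ⟨δ, hδ, fun {y} hy => lt_of_le_of_lt (hδle y hy) hm⟩
  exact mem_of_superset ((countable_iInter_mem).2 hGresidual) hsub
end
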